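/- arXiv:1009.4910 — 4 statements merged into one kernel-verified Lean document; each statement's English description precedes it below -/
import Mathlib

section
/- The 2-form ω_M = Σⱼ (μⱼ dvⱼ ∧ daⱼ + vⱼ dμⱼ ∧ daⱼ + dθⱼ ∧ dμⱼ) on ℝᴺ × ℝᴺ × ℝᴺ × (0,∞)ᴺ (coordinates a, v, θ, μ) is closed and nondegenerate, i.e., a symplectic form. -/
open Matrix

/-- The coordinate matrix of the 2-form
`ω_M = Σⱼ (μⱼ dvⱼ∧daⱼ + vⱼ dμⱼ∧daⱼ + dθⱼ∧dμⱼ)` on the `4N`-dimensional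
space with coordinates indexed by `Fin 4 × Fin N`, where the first index
`0,1,2,3` labels the blocks `a, v, θ, μ` respectively; `Ω p i j = ω_M(eᵢ, eⱼ)`
at the point `p`. -/
def Omega (N : ℕ) (p : Fin 4 × Fin N → ℝ) :
    Matrix (Fin 4 × Fin N) (Fin 4 × Fin N) ℝ :=
  fun i j =>
    if i.2 = j.2 then
      if i.1 = 1 ∧ j.1 = 0 then p (3, j.2)
      else if i.1 = 0 ∧ j.1 = 1 then -p (3, j.2)
      else if i.1 = 3 ∧ j.1 = 0 then p (1, j.2)
      else if i.1 = 0 ∧ j.1 = 3 then -p (1, j.2)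
      else if i.1 = 2 ∧ j.1 = 3 then 1
      else if i.1 = 3 ∧ j.1 = 2 then -1
      else 0
    else 0

lemma d_upd {N : ℕ} (p : Fin 4 × Fin N → ℝ) (i x : Fin 4 × Fin N) :
    deriv (fun s => Function.update p i s x) (p i) = if x = i then 1 else 0 := by
  by_cases h : x = i <;> simp [Function.update_apply, h]

lemma d_upd_neg {N : ℕ} (p : Fin 4 × Fin N → ℝ) (i x : Fin 4 × Fin N) :
    deriv (fun s => -Function.update p i s x) (p i) = if x = i then -1 else 0 := by
  by_cases h : x = i <;> simp [Function.update_apply, h]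

lemma deriv_Omega {N : ℕ} (p : Fin 4 × Fin N → ℝ) (i j k : Fin 4 × Fin N) :
    deriv (fun s => Omega N (Function.update p i s) j k) (p i) =
      if j.2 = k.2 then
        if j.1 = 1 ∧ k.1 = 0 then (if ((3 : Fin 4), k.2) = i then 1 else 0)
        else if j.1 = 0 ∧ k.1 = 1 then (if ((3 : Fin 4), k.2) = i then -1 else 0)
        else if j.1 = 3 ∧ k.1 = 0 then (if ((1 : Fin 4), k.2) = i then 1 else 0)
        else if j.1 = 0 ∧ k.1 = 3 then (if ((1 : Fin 4), k.2) = i then -1 else 0)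
        else 0
      else 0 := by
  simp only [Omega]
  split_ifs with h1 h2 h3 h4 h5 h6 h7 <;>
    simp [d_upd, d_upd_neg] <;> assumption

lemma mulVec_Omega {N : ℕ} (p : Fin 4 × Fin N → ℝ) (X : Fin 4 × Fin N → ℝ)
    (c : Fin 4) (m : Fin N) :
    (Omega N p *ᵥ X) (c, m) = ∑ d : Fin 4, Omega N p (c, m) (d, m) * X (d, m) := by
  rw [Matrix.mulVec, dotProduct, Fintype.sum_prod_type]
  refine Finset.sum_congr rfl fun d _ => ?_
  rw [Finset.sum_eq_single m]
  · intro n _ hn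
    simp [Omega, Ne.symm hn]
  · simp

/-- `ω_M` is a symplectic form on `{μⱼ > 0}`: it is antisymmetric, closed
(the cyclic sum of coordinate partial derivatives of its coefficients
vanishes), and nondegenerate. -/
theorem omegaM_symplectic (N : ℕ) (p : Fin 4 × Fin N → ℝ)
    (hμ : ∀ j, 0 < p (3, j)) :
    (Omega N p)ᵀ = -(Omega N p) ∧
    (∀ i j k : Fin 4 × Fin N,
      deriv (fun s => Omega N (Function.update p i s) j k) (p i)
        + deriv (fun s => Omega N (Function.update p j s) k i) (p j)
        + deriv (fun s => Omega N (Function.update p k s) i j) (p k) = 0) ∧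
    (∀ X : Fin 4 × Fin N → ℝ, X ≠ 0 → Omega N p *ᵥ X ≠ 0) := by
  refine ⟨?_, ?_, ?_⟩
  · ext ⟨ci, mi⟩ ⟨cj, mj⟩
    by_cases h : mi = mj
    · subst h
      fin_cases ci <;> fin_cases cj <;>
        simp [Omega, Matrix.transpose_apply]
    · simp [Omega, Matrix.transpose_apply, h, Ne.symm h]
  · intro i j k
    simp only [deriv_Omega]
    obtain ⟨ci, mi⟩ := i; obtain ⟨cj, mj⟩ := j; obtain ⟨ck, mk⟩ := k
    by_cases h1 : mi = mj
    · subst h1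
      by_cases h2 : mi = mk
      · subst h2
        fin_cases ci <;> fin_cases cj <;> fin_cases ck <;>
          norm_num [Fin.ext_iff, show ((0:Fin 4).val)=0 from rfl,
            show ((1:Fin 4).val)=1 from rfl, show ((2:Fin 4).val)=2 from rfl,
            show ((3:Fin 4).val)=3 from rfl]
      · simp [Prod.mk.injEq, h2, Ne.symm h2]
    · by_cases h2 : mj = mk
      · subst h2
        simp [Prod.mk.injEq, h1, Ne.symm h1]
      · by_cases h3 : mk = mi
        · subst h3
          simp [Prod.mk.injEq, h1, h2, Ne.symm h1, Ne.symm h2]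
        · simp [Prod.mk.injEq, h1, h2, h3, Ne.symm h1, Ne.symm h2, Ne.symm h3]
  · intro X hX h
    apply hX
    funext x
    obtain ⟨d, m⟩ := x
    have e : ∀ c : Fin 4, (Omega N p *ᵥ X) (c, m) = 0 := fun c => congrFun h (c, m)
    have e0 := e 0; have e1 := e 1; have e2 := e 2; have e3 := e 3
    rw [mulVec_Omega, Fin.sum_univ_four] at e0 e1 e2 e3
    simp [Omega] at e0 e1 e2 e3
    have h0 : X (0, m) = 0 := e1.resolve_left (hμ m).ne'
    have h3 : X (3, m) = 0 := e2
    have h2 : X (2, m) = 0 := by rw [h0] at e3; linarith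
    have h1 : X (1, m) = 0 := by
      have hz : p (3, m) * X (1, m) = 0 := by rw [h3] at e0; linarith
      exact (mul_eq_zero.mp hz).resolve_left (hμ m).ne'
    fin_cases d <;> simp [h0, h1, h2, h3]
end

section
/- The Hamilton vector field of H_N = Σⱼ(μⱼvⱼ²/2 - μⱼ³/6) + V_N(a,v,θ,μ) with respect to the symplectic form ω_M = Σⱼ(μⱼdvⱼ∧daⱼ + vⱼdμⱼ∧daⱼ + dθⱼ∧dμⱼ) generates exactly the effective dynamics equations: v̇ⱼ = -μⱼ⁻¹(∂_{aⱼ}V_N + vⱼ∂_{θⱼ}V_N), ȧⱼ = vⱼ + μⱼ⁻¹∂_{vⱼ}V_N, μ̇ⱼ = ∂_{θⱼ}V_N, θ̇ⱼ = vⱼ²/2 + μⱼ²/2 + μⱼ⁻¹vⱼ∂_{vⱼ}V_N - ∂_{μⱼ}V_N. -/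
/-!
`ω_M` only pairs coordinates carrying the same particle index `j`, so both `dH_N(Y)` and
`ω_M(Y, Ξ)` are sums over `j` of linear forms in the four components `Y (·, j)`. Comparing the
coefficients of `Y_a, Y_v, Y_θ, Y_μ` leaves four scalar identities, in which every `μⱼ⁻¹` of `Ξ`
cancels against a factor `μⱼ ≠ 0` of `ω_M`.
-/
open Matrix

theorem ContinuousLinearMap.apply_eq_sum_smul_single {R M ι : Type*} [Semiring R]
    [TopologicalSpace R] [AddCommMonoid M] [TopologicalSpace M] [Module R M]
    [Fintype ι] [DecidableEq ι] (f : (ι → R) →L[R] M) (x : ι → R) :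
    f x = ∑ i, x i • f (Pi.single i 1) := by
  conv_lhs => rw [pi_eq_sum_univ' x]
  simp only [map_sum, map_smul]

section

variable {N : ℕ}

open ContinuousLinearMap in
theorem hasFDerivAt_kineticEnergy (p : Fin 4 × Fin N → ℝ) :
    HasFDerivAt (fun q : Fin 4 × Fin N → ℝ =>
        ∑ j, (q (3, j) * (q (1, j))^2 / 2 - (q (3, j))^3 / 6))
      (∑ j, ((p (3, j) * p (1, j)) • proj (R := ℝ) (φ := fun _ => ℝ) (1, j)
        + ((p (1, j))^2 / 2 - (p (3, j))^2 / 2) • proj (R := ℝ) (φ := fun _ => ℝ) (3, j))) p := by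
  refine HasFDerivAt.fun_sum fun j _ => ?_
  have hv := hasFDerivAt_apply (𝕜 := ℝ) (1, j) p
  have hμ := hasFDerivAt_apply (𝕜 := ℝ) (3, j) p
  convert ((hμ.fun_mul (hv.pow 2)).mul_const (2⁻¹ : ℝ)).fun_sub ((hμ.pow 3).mul_const (6⁻¹ : ℝ))
    using 1
  · funext q
    ring
  · ext Y
    simp only [_root_.add_apply, _root_.sub_apply, _root_.smul_apply, smul_add, smul_eq_mul,
      ContinuousLinearMap.proj_apply, nsmul_eq_mul, Nat.cast_ofNat, Nat.add_one_sub_one, pow_one]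
    ring

theorem sum_Omega_contract (p Y Ξ : Fin 4 × Fin N → ℝ) :
    ∑ i, ∑ j, Y i * Omega N p i j * Ξ j =
      ∑ b, (Y (0, b) * (-(p (3, b) * Ξ (1, b)) - p (1, b) * Ξ (3, b))
        + Y (1, b) * (p (3, b) * Ξ (0, b)) + Y (2, b) * Ξ (3, b)
        + Y (3, b) * (p (1, b) * Ξ (0, b) - Ξ (2, b))) := by
  have row_sum : ∀ i, ∑ j, Y i * Omega N p i j * Ξ j =
      ∑ c, Y i * Omega N p i (c, i.2) * Ξ (c, i.2) := by
    intro i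
    rw [Fintype.sum_prod_type]
    refine Finset.sum_congr rfl fun c _ => Fintype.sum_eq_single i.2 fun b hb => ?_
    simp [Omega, Ne.symm hb]
  simp only [row_sum]
  rw [Fintype.sum_prod_type, Finset.sum_comm]
  refine Finset.sum_congr rfl fun b _ => ?_
  simp only [Omega, Fin.sum_univ_four, ↓reduceIte, Fin.isValue, Fin.reduceEq, mul_ite, ite_mul,
    mul_neg, neg_mul, mul_one, mul_zero, zero_mul, and_true, and_false, zero_ne_one, one_ne_zero,
    zero_add, add_zero]
  ring

end

/-- The Hamilton vector field of
`H_N = Σⱼ(μⱼvⱼ²/2 - μⱼ³/6) + V_N` with respect to `ω_M` (with the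
convention `dH_N = ω_M(·, Ξ)`) is exactly the right-hand side of the
effective dynamics equations (3.10). -/
theorem hamilton_vector_field_effective_dynamics (N : ℕ)
    (VN : (Fin 4 × Fin N → ℝ) → ℝ) (hVN : ContDiff ℝ 1 VN)
    (p : Fin 4 × Fin N → ℝ) (hμ : ∀ j, 0 < p (3, j))
    (Ξ : Fin 4 × Fin N → ℝ)
    (hΞa : ∀ j, Ξ (0, j) =
      p (1, j) + (p (3, j))⁻¹ * fderiv ℝ VN p (Pi.single (1, j) 1))
    (hΞv : ∀ j, Ξ (1, j) =
      -(p (3, j))⁻¹ * (fderiv ℝ VN p (Pi.single (0, j) 1)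
        + p (1, j) * fderiv ℝ VN p (Pi.single (2, j) 1)))
    (hΞθ : ∀ j, Ξ (2, j) =
      (p (1, j))^2/2 + (p (3, j))^2/2
        + (p (3, j))⁻¹ * p (1, j) * fderiv ℝ VN p (Pi.single (1, j) 1)
        - fderiv ℝ VN p (Pi.single (3, j) 1))
    (hΞμ : ∀ j, Ξ (3, j) = fderiv ℝ VN p (Pi.single (2, j) 1)) :
    ∀ Y : Fin 4 × Fin N → ℝ,
      fderiv ℝ (fun q : Fin 4 × Fin N → ℝ =>
          (∑ j, (q (3, j) * (q (1, j))^2 / 2 - (q (3, j))^3 / 6)) + VN q) p Y =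
        ∑ i, ∑ j, Y i * Omega N p i j * Ξ j := by
  intro Y
  have hV : HasFDerivAt VN (fderiv ℝ VN p) p :=
    (hVN.differentiable one_ne_zero p).hasFDerivAt
  rw [((hasFDerivAt_kineticEnergy p).fun_add hV).fderiv, _root_.add_apply,
    ContinuousLinearMap.apply_eq_sum_smul_single (fderiv ℝ VN p) Y, sum_Omega_contract]
  simp only [_root_.add_apply, FunLike.coe_sum, Finset.sum_apply, _root_.smul_apply,
    ContinuousLinearMap.proj_apply, smul_eq_mul, Fintype.sum_prod_type, Fin.sum_univ_four,
    ← Finset.sum_add_distrib]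
  refine Finset.sum_congr rfl fun j _ => ?_
  have hμj : p (3, j) ≠ 0 := (hμ j).ne'
  rw [hΞa j, hΞv j, hΞθ j, hΞμ j]
  field_simp
  ring
end

section
/- Along any solution of the effective dynamics equations (with time-independent V_N of class C¹), the restricted Hamiltonian H_N(a(t), v(t), θ(t), μ(t)) = Σⱼ(μⱼvⱼ²/2 - μⱼ³/6) + V_N(a,v,θ,μ) is constant in time. -/
/-!
The equations of motion have the form `ẋ = J(x) ∇H_N(x)` with `J(x)` antisymmetric
(`ȧ = μ⁻¹ ∂_v H`, `v̇ = -μ⁻¹ (∂_a H + v ∂_θ H)`, `θ̇ = μ⁻¹ v ∂_v H - ∂_μ H`, `μ̇ = ∂_θ H`),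
so `d/dt H_N = ⟨∇H_N, J ∇H_N⟩ = 0` for each soliton `j` separately.
-/

open Finset

theorem ContinuousLinearMap.apply_eq_sum_mul_apply_single {ι : Type*} [Fintype ι]
    [DecidableEq ι] (L : (ι → ℝ) →L[ℝ] ℝ) (q : ι → ℝ) :
    L q = ∑ i, q i * L (Pi.single i 1) := by
  conv_lhs => rw [← univ_sum_single q, map_sum]
  refine sum_congr rfl fun i _ => ?_
  rw [← smul_eq_mul, ← map_smul, ← Pi.single_smul', smul_eq_mul, mul_one]

theorem HasFDerivAt.hasDerivAt_comp_eq_sum_partials {ι : Type*} [Fintype ι] [DecidableEq ι]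
    {V : (ι → ℝ) → ℝ} {V' : (ι → ℝ) →L[ℝ] ℝ} {p : ℝ → ι → ℝ} {t : ℝ}
    (hV : HasFDerivAt V V' (p t)) (hp : ∀ i, DifferentiableAt ℝ (fun s => p s i) t) :
    HasDerivAt (fun s => V (p s)) (∑ i, deriv (fun s => p s i) t * V' (Pi.single i 1)) t := by
  rw [← V'.apply_eq_sum_mul_apply_single]
  exact hV.comp_hasDerivAt t (hasDerivAt_pi.2 fun i => (hp i).hasDerivAt)

noncomputable def freeHamiltonian (v μ : ℝ) : ℝ := μ * v ^ 2 / 2 - μ ^ 3 / 6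

theorem HasDerivAt.freeHamiltonian {v μ : ℝ → ℝ} {v' μ' t : ℝ}
    (hv : HasDerivAt v v' t) (hμ : HasDerivAt μ μ' t) :
    HasDerivAt (fun s => freeHamiltonian (v s) (μ s))
      (μ' * v t ^ 2 / 2 + μ t * v t * v' - μ t ^ 2 * μ' / 2) t := by
  refine (((hμ.fun_mul (hv.fun_pow 2)).div_const 2).fun_sub
    ((hμ.fun_pow 3).div_const 6)).congr_deriv ?_
  push_cast
  ring

theorem freeHamiltonian_deriv_add_potential_deriv_eq_zero
    {v μ a' v' θ' μ' Va Vv Vθ Vμ : ℝ} (hμ : μ ≠ 0)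
    (ha : a' = v + μ⁻¹ * Vv) (hv : v' = -μ⁻¹ * (Va + v * Vθ))
    (hθ : θ' = v ^ 2 / 2 + μ ^ 2 / 2 + μ⁻¹ * v * Vv - Vμ) (hμ' : μ' = Vθ) :
    (μ' * v ^ 2 / 2 + μ * v * v' - μ ^ 2 * μ' / 2)
      + (a' * Va + v' * Vv + θ' * Vθ + μ' * Vμ) = 0 := by
  subst ha hv hθ hμ'
  field_simp
  ring

/-- Coordinates are indexed by `Fin 4 × Fin N` with blocks `0,1,2,3` = `a,v,θ,μ`. -/
theorem effective_dynamics_conserves_HN (N : ℕ)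
    (VN : (Fin 4 × Fin N → ℝ) → ℝ) (hVN : ContDiff ℝ 1 VN)
    (p : ℝ → (Fin 4 × Fin N → ℝ))
    (hdiff : ∀ i, Differentiable ℝ (fun t => p t i))
    (hμpos : ∀ t j, 0 < p t (3, j))
    (haeq : ∀ t j, deriv (fun s => p s (0, j)) t =
      p t (1, j) + (p t (3, j))⁻¹ * fderiv ℝ VN (p t) (Pi.single (1, j) 1))
    (hveq : ∀ t j, deriv (fun s => p s (1, j)) t =
      -(p t (3, j))⁻¹ * (fderiv ℝ VN (p t) (Pi.single (0, j) 1)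
        + p t (1, j) * fderiv ℝ VN (p t) (Pi.single (2, j) 1)))
    (hθeq : ∀ t j, deriv (fun s => p s (2, j)) t =
      (p t (1, j))^2/2 + (p t (3, j))^2/2
        + (p t (3, j))⁻¹ * p t (1, j) * fderiv ℝ VN (p t) (Pi.single (1, j) 1)
        - fderiv ℝ VN (p t) (Pi.single (3, j) 1))
    (hμeq : ∀ t j, deriv (fun s => p s (3, j)) t =
      fderiv ℝ VN (p t) (Pi.single (2, j) 1)) :
    ∀ t : ℝ,
      (∑ j, (p t (3, j) * (p t (1, j))^2 / 2 - (p t (3, j))^3 / 6)) + VN (p t) =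
      (∑ j, (p 0 (3, j) * (p 0 (1, j))^2 / 2 - (p 0 (3, j))^3 / 6)) + VN (p 0) := by
  have hH : ∀ t, HasDerivAt
      (fun s => ∑ j, freeHamiltonian (p s (1, j)) (p s (3, j)) + VN (p s)) 0 t := by
    intro t
    have hfree := HasDerivAt.fun_sum (u := univ) fun j _ =>
      ((hdiff (1, j)) t).hasDerivAt.freeHamiltonian ((hdiff (3, j)) t).hasDerivAt
    have hV := ((hVN.differentiable one_ne_zero) (p t)).hasFDerivAt
      |>.hasDerivAt_comp_eq_sum_partials fun i => hdiff i t
    refine (hfree.add hV).congr_deriv ?_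
    rw [Fintype.sum_prod_type_right, ← sum_add_distrib]
    refine sum_eq_zero fun j _ => ?_
    simp only [Fin.sum_univ_four]
    exact freeHamiltonian_deriv_add_potential_deriv_eq_zero (hμpos t j).ne'
      (haeq t j) (hveq t j) (hθeq t j) (hμeq t j)
  intro t
  exact is_const_of_deriv_eq_zero (fun s => (hH s).differentiableAt) (fun s => (hH s).deriv) t 0
end

section
/- For N = 2 with parameters λ₁ = v₁ + iμ₁, λ₂ = v₂ + iμ₂ (μ₁, μ₂ > 0) and nonzero γ₁, γ₂ ∈ ℂ, the matrix M with M_{jk} = (1 + γⱼγ̄ₖ)/(λⱼ - λ̄ₖ) is invertible provided λ₁ ≠ λ₂. -/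
/-!
Writing `P = (1 + |γ₀|²)(1 + |γ₁|²)` and `Q = |1 + γ₀γ̄₁|²`, a direct computation gives
`det M = Q / |λ₀ - λ̄₁|² - P / (4 μ₀ μ₁)`, a real number. The identities
`P = Q + |γ₀ - γ₁|²` and `|λ₀ - λ̄₁|² = |λ₀ - λ₁|² + 4 μ₀ μ₁` show `Q ≤ P` and
`4 μ₀ μ₁ < |λ₀ - λ̄₁|²` when `λ₀ ≠ λ₁`, so the determinant is strictly negative.
-/

open Complex ComplexConjugate

namespace Complex

theorem one_add_normSq_mul_one_add_normSq (a b : ℂ) :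
    (1 + normSq a) * (1 + normSq b) = normSq (1 + a * conj b) + normSq (a - b) := by
  simp only [normSq_apply, add_re, add_im, mul_re, mul_im, sub_re, sub_im, conj_re, conj_im,
    one_re, one_im]
  ring

theorem normSq_one_add_mul_conj_le (a b : ℂ) :
    normSq (1 + a * conj b) ≤ (1 + normSq a) * (1 + normSq b) := by
  rw [one_add_normSq_mul_one_add_normSq]
  exact le_add_of_nonneg_right (normSq_nonneg _)

theorem normSq_sub_conj (z w : ℂ) :
    normSq (z - conj w) = normSq (z - w) + 4 * z.im * w.im := by
  simp only [normSq_apply, sub_re, sub_im, conj_re, conj_im]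
  ring

theorem four_mul_im_mul_im_lt_normSq_sub_conj {z w : ℂ} (hzw : z ≠ w) :
    4 * z.im * w.im < normSq (z - conj w) := by
  rw [normSq_sub_conj]
  have : 0 < normSq (z - w) := normSq_pos.mpr (sub_ne_zero.mpr hzw)
  linarith

end Complex

noncomputable def pickMatrix {n : Type*} (z γ : n → ℂ) : Matrix n n ℂ :=
  Matrix.of fun j k => (1 + γ j * conj (γ k)) / (z j - conj (z k))

theorem det_pickMatrix_fin_two (z γ : Fin 2 → ℂ) :
    (pickMatrix z γ).det =
      ((normSq (1 + γ 0 * conj (γ 1)) / normSq (z 0 - conj (z 1)) -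
        (1 + normSq (γ 0)) * (1 + normSq (γ 1)) / (4 * (z 0).im * (z 1).im) : ℝ) : ℂ) := by
  have hdiag : ∀ j, 1 + γ j * conj (γ j) = ((1 + normSq (γ j) : ℝ) : ℂ) := fun j => by
    rw [mul_conj]; push_cast; rfl
  have hdiag_den :
      (z 0 - conj (z 0)) * (z 1 - conj (z 1)) = ((-(4 * (z 0).im * (z 1).im) : ℝ) : ℂ) := by
    rw [sub_conj, sub_conj]; push_cast
    linear_combination (4 * ((z 0).im : ℂ) * (z 1).im) * I_sq
  have hoff :
      (1 + γ 0 * conj (γ 1)) * (1 + γ 1 * conj (γ 0)) = (normSq (1 + γ 0 * conj (γ 1)) : ℂ) := by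
    rw [← mul_conj]; simp only [map_add, map_mul, map_one, conj_conj]; ring
  have hoff_den :
      (z 0 - conj (z 1)) * (z 1 - conj (z 0)) = ((-normSq (z 0 - conj (z 1)) : ℝ) : ℂ) := by
    rw [ofReal_neg, ← mul_conj]; simp only [map_sub, conj_conj]; ring
  simp only [Matrix.det_fin_two, pickMatrix, Matrix.of_apply]
  rw [div_mul_div_comm, div_mul_div_comm, hdiag, hdiag, hoff, hdiag_den, hoff_den]
  push_cast
  rw [div_neg, div_neg]
  ring

theorem det_pickMatrix_fin_two_ne_zero {z : Fin 2 → ℂ} (hz : ∀ j, 0 < (z j).im)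
    (hne : z 0 ≠ z 1) (γ : Fin 2 → ℂ) : (pickMatrix z γ).det ≠ 0 := by
  rw [det_pickMatrix_fin_two, ne_eq, ofReal_eq_zero, sub_eq_zero]
  refine ne_of_lt ?_
  have hP : 0 < (1 + normSq (γ 0)) * (1 + normSq (γ 1)) :=
    mul_pos (add_pos_of_pos_of_nonneg one_pos (normSq_nonneg _))
      (add_pos_of_pos_of_nonneg one_pos (normSq_nonneg _))
  have hμ : 0 < 4 * (z 0).im * (z 1).im := mul_pos (mul_pos four_pos (hz 0)) (hz 1)
  calc normSq (1 + γ 0 * conj (γ 1)) / normSq (z 0 - conj (z 1))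
      ≤ (1 + normSq (γ 0)) * (1 + normSq (γ 1)) / normSq (z 0 - conj (z 1)) :=
        div_le_div_of_nonneg_right (normSq_one_add_mul_conj_le _ _) (normSq_nonneg _)
    _ < (1 + normSq (γ 0)) * (1 + normSq (γ 1)) / (4 * (z 0).im * (z 1).im) :=
        div_lt_div_of_pos_left hP hμ (four_mul_im_mul_im_lt_normSq_sub_conj hne)

theorem M_invertible_N2_general (v μ : Fin 2 → ℝ) (hμ : ∀ j, 0 < μ j)
    (hlam : (v 0 : ℂ) + Complex.I * (μ 0 : ℂ) ≠ (v 1 : ℂ) + Complex.I * (μ 1 : ℂ))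
    (γ : Fin 2 → ℂ)
    (M : Matrix (Fin 2) (Fin 2) ℂ)
    (hM : ∀ j k, M j k =
      (1 + γ j * starRingEnd ℂ (γ k)) /
        (((v j : ℂ) + Complex.I * (μ j : ℂ)) -
          starRingEnd ℂ ((v k : ℂ) + Complex.I * (μ k : ℂ)))) :
    IsUnit M.det := by
  have hM' : M = pickMatrix (fun j => (v j : ℂ) + I * μ j) γ := Matrix.ext hM
  have him : ∀ j, 0 < ((v j : ℂ) + I * μ j).im := fun j => by simpa using hμ j
  rw [isUnit_iff_ne_zero, hM']
  exact det_pickMatrix_fin_two_ne_zero him hlam γ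

/-- For `N = 2`, the matrix `M` with `M_{jk} = (1 + γⱼγ̄ₖ)/(λⱼ - λ̄ₖ)`,
`λⱼ = vⱼ + iμⱼ`, `μⱼ > 0`, `γⱼ ≠ 0`, is invertible provided `λ₁ ≠ λ₂`. -/
theorem M_invertible_N2 (v μ : Fin 2 → ℝ) (hμ : ∀ j, 0 < μ j)
    (hlam : (v 0 : ℂ) + Complex.I * (μ 0 : ℂ) ≠ (v 1 : ℂ) + Complex.I * (μ 1 : ℂ))
    (γ : Fin 2 → ℂ) (hγ : ∀ j, γ j ≠ 0)
    (M : Matrix (Fin 2) (Fin 2) ℂ)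
    (hM : ∀ j k, M j k =
      (1 + γ j * starRingEnd ℂ (γ k)) /
        (((v j : ℂ) + Complex.I * (μ j : ℂ)) -
          starRingEnd ℂ ((v k : ℂ) + Complex.I * (μ k : ℂ)))) :
    IsUnit M.det :=
  M_invertible_N2_general v μ hμ hlam γ M hM
end
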